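/- arXiv:1710.00878 — 2 statements merged into one kernel-verified Lean document; each statement's English description precedes it below -/
import Mathlib

section
/- Fix a probability vector p = (p_0,p_1,p_2,p_3) with all p_j > 0, and Kraus operators M_k = √(p_k) σ_k (k = 0,1,2,3, with σ_0 = I). For the projection A'(+) built from the unit vector n' with n'_j = (n_j / p_+[j]) · (Σ_k n_k²/p_+[k]²)^{−1/2} (where n is a unit vector in ℝ³), the operator Σ_{k,l} ⟨e_k | A'(+) e_l⟩ √(p_k p_l) σ_k σ_l equals (1/2)[ I + s_max (n·σ) ], where s_max = (n_1²/p_+[1]² + n_2²/p_+[2]² + n_3²/p_+[3]²)^{−1/2}. -/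
set_option maxHeartbeats 2000000


open Matrix Complex

noncomputable def pauli : Fin 4 → Matrix (Fin 2) (Fin 2) ℂ :=
  ![1, !![0, 1; 1, 0], !![0, -I; I, 0], !![1, 0; 0, -1]]

/-- `p₊[j]` for a quadruple `p : Fin 4 → ℝ` (indices `j = 0,1,2` stand for `1,2,3`). -/
noncomputable def pPlus (p : Fin 4 → ℝ) : Fin 3 → ℝ
  | 0 => 2 * (Real.sqrt (p 0 * p 1) + Real.sqrt (p 2 * p 3))
  | 1 => 2 * (Real.sqrt (p 0 * p 2) + Real.sqrt (p 1 * p 3))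
  | 2 => 2 * (Real.sqrt (p 0 * p 3) + Real.sqrt (p 1 * p 2))

/-- The 4×4 projection `A'(+)` built from a real vector `n'`. -/
noncomputable def Aprime (n : Fin 3 → ℝ) : Matrix (Fin 4) (Fin 4) ℂ :=
  (1 / 2 : ℂ) • !![1, (n 0 : ℂ), (n 1 : ℂ), (n 2 : ℂ);
                   (n 0 : ℂ), 1, -I * (n 2 : ℂ), I * (n 1 : ℂ);
                   (n 1 : ℂ), I * (n 2 : ℂ), 1, -I * (n 0 : ℂ);
                   (n 2 : ℂ), -I * (n 1 : ℂ), I * (n 0 : ℂ), 1]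

theorem optimal_effect_formula (p : Fin 4 → ℝ) (hp : ∀ k, 0 < p k)
    (hpsum : p 0 + p 1 + p 2 + p 3 = 1)
    (n : Fin 3 → ℝ) (hn : n 0 ^ 2 + n 1 ^ 2 + n 2 ^ 2 = 1)
    (smax : ℝ)
    (hsmax : smax = 1 / Real.sqrt
      (n 0 ^ 2 / pPlus p 0 ^ 2 + n 1 ^ 2 / pPlus p 1 ^ 2 + n 2 ^ 2 / pPlus p 2 ^ 2))
    (n' : Fin 3 → ℝ) (hn' : ∀ j, n' j = n j / pPlus p j * smax) :
    ∑ k : Fin 4, ∑ l : Fin 4,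
        (Aprime n' k l * (Real.sqrt (p k * p l) : ℂ)) • (pauli k * pauli l)
      = (1 / 2 : ℂ) • ((1 : Matrix (Fin 2) (Fin 2) ℂ)
          + (smax : ℂ) • (n 0 • pauli 1 + n 1 • pauli 2 + n 2 • pauli 3)) := by
  have hpp : ∀ j, 0 < pPlus p j := by
    intro j
    have h0 := hp 0; have h1 := hp 1; have h2 := hp 2; have h3 := hp 3
    fin_cases j <;> simp only [pPlus] <;> positivity
  have key : ∀ j, (n' j) * pPlus p j = n j * smax := by
    intro j
    rw [hn' j]
    field_simp
    rw [mul_right_comm (n j)]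
    exact mul_div_cancel_right₀ _ (hpp j).ne'
  have k0 : ((n' 0 : ℂ)) * (2 * (Real.sqrt (p 0 * p 1) + Real.sqrt (p 2 * p 3))) = (n 0 : ℂ) * smax := by
    exact_mod_cast congrArg Complex.ofReal (key 0)
  have k1 : ((n' 1 : ℂ)) * (2 * (Real.sqrt (p 0 * p 2) + Real.sqrt (p 1 * p 3))) = (n 1 : ℂ) * smax := by
    exact_mod_cast congrArg Complex.ofReal (key 1)
  have k2 : ((n' 2 : ℂ)) * (2 * (Real.sqrt (p 0 * p 3) + Real.sqrt (p 1 * p 2))) = (n 2 : ℂ) * smax := by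
    exact_mod_cast congrArg Complex.ofReal (key 2)
  have hs : ∀ k, Real.sqrt (p k * p k) = p k := fun k => Real.sqrt_mul_self (hp k).le
  have hsum : ((p 0 : ℂ)) + p 1 + p 2 + p 3 = 1 := by exact_mod_cast hpsum
  have hc : ∀ a b : Fin 4, Real.sqrt (p a * p b) = Real.sqrt (p b * p a) := by
    intro a b; rw [mul_comm]
  have c10 := hc 1 0; have c20 := hc 2 0; have c30 := hc 3 0
  have c21 := hc 2 1; have c31 := hc 3 1; have c32 := hc 3 2
  ext i j
  fin_cases i <;> fin_cases j <;>
    simp [Fin.sum_univ_four, Aprime, pauli, Matrix.mul_apply, Fin.sum_univ_two,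
      Matrix.one_apply, hs, Matrix.add_apply, Matrix.smul_apply, c10, c20, c30, c21, c31, c32] <;>
    push_cast <;>
    first
    | linear_combination (1/2:ℂ)*hsum + (1/2:ℂ)*k2
        + (-(n' 2 : ℂ) * (Real.sqrt (p 1 * p 2) : ℂ)) * Complex.I_sq
    | linear_combination (1/2:ℂ)*hsum - (1/2:ℂ)*k2
        + ((n' 2 : ℂ) * (Real.sqrt (p 1 * p 2) : ℂ)) * Complex.I_sq
    | linear_combination (1/2:ℂ)*k0 - (Complex.I/2)*k1
        + (-(n' 0 : ℂ) * (Real.sqrt (p 2 * p 3) : ℂ)) * Complex.I_sq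
    | linear_combination (1/2:ℂ)*k0 + (Complex.I/2)*k1
        + (-(n' 0 : ℂ) * (Real.sqrt (p 2 * p 3) : ℂ)) * Complex.I_sq
end

section
/- Let p = (p_0,p_1,p_2,p_3) be a probability vector with all p_j > 0, n a unit vector in ℝ³ and n' the unit vector with n'_j proportional to n_j/p_+[j]. Define the vector g ∈ ℝ³ (assuming n'_1 ≠ ±1) by g = (1/√(1−n'_1²)) · ( (p_−[2]/p_+[2]) n'_2² − (p_−[3]/p_+[3]) n'_3², ( p_−[2]/p_+[2] + p_−[3]/p_+[3] ) n'_2 n'_3, −n'_1 √(1−n'_1²) p_−[1]/p_+[1] ). Then ‖g‖ ≤ 1. -/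
/-- `p₋[j]` for a quadruple `p : Fin 4 → ℝ` (indices `j = 0,1,2` stand for `1,2,3`). -/
noncomputable def pMinus (p : Fin 4 → ℝ) : Fin 3 → ℝ
  | 0 => 2 * (Real.sqrt (p 0 * p 1) - Real.sqrt (p 2 * p 3))
  | 1 => 2 * (Real.sqrt (p 0 * p 2) - Real.sqrt (p 1 * p 3))
  | 2 => 2 * (Real.sqrt (p 0 * p 3) - Real.sqrt (p 1 * p 2))

theorem dual_vector_g_norm_le_one (p : Fin 4 → ℝ) (hp : ∀ k, 0 < p k)
    (hpsum : p 0 + p 1 + p 2 + p 3 = 1)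
    (n : Fin 3 → ℝ) (hn : n 0 ^ 2 + n 1 ^ 2 + n 2 ^ 2 = 1)
    (n' : Fin 3 → ℝ) (hn'unit : n' 0 ^ 2 + n' 1 ^ 2 + n' 2 ^ 2 = 1)
    (hn'prop : ∃ c : ℝ, 0 < c ∧ ∀ j : Fin 3, n' j = c * (n j / pPlus p j))
    (h1 : n' 0 ≠ 1) (h2 : n' 0 ≠ -1)
    (g : Fin 3 → ℝ)
    (hg0 : g 0 = (1 / Real.sqrt (1 - n' 0 ^ 2)) *
      (pMinus p 1 / pPlus p 1 * n' 1 ^ 2 - pMinus p 2 / pPlus p 2 * n' 2 ^ 2))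
    (hg1 : g 1 = (1 / Real.sqrt (1 - n' 0 ^ 2)) *
      ((pMinus p 1 / pPlus p 1 + pMinus p 2 / pPlus p 2) * n' 1 * n' 2))
    (hg2 : g 2 = (1 / Real.sqrt (1 - n' 0 ^ 2)) *
      (-(n' 0) * Real.sqrt (1 - n' 0 ^ 2) * (pMinus p 0 / pPlus p 0))) :
    Real.sqrt (g 0 ^ 2 + g 1 ^ 2 + g 2 ^ 2) ≤ 1 := by
  -- ratio bounds
  have hratio : ∀ j : Fin 3, (pMinus p j / pPlus p j) ^ 2 ≤ 1 := by
    intro j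
    have key : ∀ x y : ℝ, 0 < x → 0 < y →
        (2 * (Real.sqrt x - Real.sqrt y) / (2 * (Real.sqrt x + Real.sqrt y))) ^ 2 ≤ 1 := by
      intro x y hx hy
      have hsx : 0 < Real.sqrt x := Real.sqrt_pos.mpr hx
      have hsy : 0 < Real.sqrt y := Real.sqrt_pos.mpr hy
      have hpos : 0 < 2 * (Real.sqrt x + Real.sqrt y) := by linarith
      rw [div_pow, div_le_one (by positivity)]
      nlinarith [hsx, hsy]
    fin_cases j
    · exact key _ _ (mul_pos (hp 0) (hp 1)) (mul_pos (hp 2) (hp 3))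
    · exact key _ _ (mul_pos (hp 0) (hp 2)) (mul_pos (hp 1) (hp 3))
    · exact key _ _ (mul_pos (hp 0) (hp 3)) (mul_pos (hp 1) (hp 2))
  have hn0lt : n' 0 ^ 2 < 1 := by
    have hle : n' 0 ^ 2 ≤ 1 := by nlinarith [sq_nonneg (n' 1), sq_nonneg (n' 2)]
    rcases lt_or_eq_of_le hle with h | h
    · exact h
    · exfalso
      have hz : (n' 0 - 1) * (n' 0 + 1) = 0 := by linear_combination h
      rcases mul_eq_zero.mp hz with h' | h'
      · exact h1 (by linarith)
      · exact h2 (by linarith)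
  have hs : (0:ℝ) < 1 - n' 0 ^ 2 := by linarith
  have hssum : 1 - n' 0 ^ 2 = n' 1 ^ 2 + n' 2 ^ 2 := by linarith
  have hsq : Real.sqrt (1 - n' 0 ^ 2) ^ 2 = 1 - n' 0 ^ 2 := Real.sq_sqrt hs.le
  have hsne : Real.sqrt (1 - n' 0 ^ 2) ≠ 0 := by positivity
  set a := pMinus p 0 / pPlus p 0
  set b := pMinus p 1 / pPlus p 1
  set c := pMinus p 2 / pPlus p 2
  have key : g 0 ^ 2 + g 1 ^ 2 + g 2 ^ 2 =
      b ^ 2 * n' 1 ^ 2 + c ^ 2 * n' 2 ^ 2 + a ^ 2 * n' 0 ^ 2 := by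
    rw [hg0, hg1, hg2]
    field_simp
    linear_combination (-(b ^ 2 * n' 1 ^ 2 + c ^ 2 * n' 2 ^ 2)) * hsq - (b ^ 2 * n' 1 ^ 2 + c ^ 2 * n' 2 ^ 2) * hssum
  have hb := hratio 1
  have hc := hratio 2
  have ha := hratio 0
  have : g 0 ^ 2 + g 1 ^ 2 + g 2 ^ 2 ≤ 1 := by
    rw [key]
    have t1 := mul_le_mul_of_nonneg_right hb (sq_nonneg (n' 1))
    have t2 := mul_le_mul_of_nonneg_right hc (sq_nonneg (n' 2))
    have t3 := mul_le_mul_of_nonneg_right ha (sq_nonneg (n' 0))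
    nlinarith [t1, t2, t3]
  calc Real.sqrt (g 0 ^ 2 + g 1 ^ 2 + g 2 ^ 2) ≤ Real.sqrt 1 := Real.sqrt_le_sqrt this
    _ = 1 := Real.sqrt_one
end
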